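/- Let f : [0,1] → ℝ be a continuous function, let t₀ ∈ [0,1] be such that f(t₀) ≠ 0, and let Z = {Z(t)}_{t∈[0,1]} be a real-valued stochastic process such that: (a) for all t₁, t₂ ∈ [0,1], the increment Z(t₁) − Z(t₂) has the centered Gaussian law N(0, ∫_{min(t₁,t₂)}^{max(t₁,t₂)} f(s)² ds); and (b) with probability 1, for every γ ∈ (0, 1/2) the trajectory t ↦ Z(t, ω) is γ-Hölder continuous on [0,1]. Then ℙ(ρ_Z(t₀) = 1/2) = 1, where ρ_Z(t₀) denotes the pointwise Hölder exponent of the trajectory of Z at t₀. -/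

import Mathlib

open MeasureTheory ProbabilityTheory Set Filter

/-- The pointwise Hölder exponent of `Y : ℝ → ℝ` at `t₀`, relative to the interval `[0,1]`:
`ρ_Y(t₀) = sup {ρ ∈ [0,1] : (Y(t₀+h) − Y(t₀))/|h|^ρ → 0 as h → 0, h ≠ 0, t₀+h ∈ [0,1]}`
(with the convention `sup ∅ = 0`, which is `Real.sSup`'s convention). -/
noncomputable def pointwiseHolderExp (Y : ℝ → ℝ) (t₀ : ℝ) : ℝ :=
  sSup {ρ : ℝ | ρ ∈ Set.Icc (0 : ℝ) 1 ∧
    Tendsto (fun h : ℝ => (Y (t₀ + h) - Y t₀) / |h| ^ ρ)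
      (nhdsWithin 0 {h : ℝ | h ≠ 0 ∧ t₀ + h ∈ Set.Icc (0 : ℝ) 1}) (nhds 0)}

/-!
Almost surely the trajectory is `γ`-Hölder for every `γ < 1/2`, which gives
`Z (t₀ + h) - Z t₀ = o(|h| ^ ρ)` for every `ρ < 1/2`. Conversely, fix `q > 1/2`. By continuity of
`f` at `t₀`, the Gaussian increment `Z (t₀ + h) - Z t₀` has variance at least `f(t₀)² |h| / 2`
for small `h`, so the probability that it is at most `|h| ^ q` in absolute value is
`O(|h| ^ (q - 1/2))`. Along a sequence `hₙ → 0` these probabilities tend to `0`, hence almost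
surely `|Z (t₀ + hₙ) - Z t₀| > |hₙ| ^ q` for infinitely many `n`, and the increment is not
`o(|h| ^ q)`. Since `o(|h| ^ q)` only gets weaker as `q` decreases, countably many rational `q`
suffice.
-/

open scoped Topology NNReal

abbrev incrementFilter (t₀ : ℝ) : Filter ℝ := 𝓝[{h : ℝ | h ≠ 0 ∧ t₀ + h ∈ Icc (0 : ℝ) 1}] 0

/-- `pointwiseHolderExp Y t₀` is, definitionally, the supremum of the `ρ ∈ [0,1]` with
`IsLittleOIncrement Y t₀ ρ`. -/
def IsLittleOIncrement (Y : ℝ → ℝ) (t₀ ρ : ℝ) : Prop :=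
  Tendsto (fun h : ℝ => (Y (t₀ + h) - Y t₀) / |h| ^ ρ) (incrementFilter t₀) (𝓝 0)

lemma tendsto_abs_rpow_nhdsWithin_zero {r : ℝ} (hr : 0 < r) (s : Set ℝ) :
    Tendsto (fun h : ℝ => |h| ^ r) (𝓝[s] 0) (𝓝 0) := by
  have hcont : ContinuousAt (fun h : ℝ => |h| ^ r) 0 :=
    (Real.continuousAt_rpow_const _ _ (Or.inr hr.le)).comp continuous_abs.continuousAt
  simpa [Real.zero_rpow hr.ne'] using hcont.tendsto.mono_left nhdsWithin_le_nhds

lemma IsLittleOIncrement.mono {Y : ℝ → ℝ} {t₀ ρ q : ℝ} (h : IsLittleOIncrement Y t₀ ρ)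
    (hq : q ≤ ρ) : IsLittleOIncrement Y t₀ q := by
  rcases hq.eq_or_lt with rfl | hlt
  · exact h
  have := h.mul (tendsto_abs_rpow_nhdsWithin_zero (sub_pos.2 hlt) _)
  rw [mul_zero] at this
  refine this.congr' ?_
  filter_upwards [self_mem_nhdsWithin] with h hh
  have hpos : 0 < |h| := abs_pos.2 hh.1
  rw [div_mul_eq_mul_div, mul_div_assoc, ← Real.rpow_sub hpos, sub_sub_cancel_left,
    Real.rpow_neg hpos.le, div_eq_mul_inv]

lemma isLittleOIncrement_of_le_mul_rpow {Y : ℝ → ℝ} {t₀ C γ ρ : ℝ}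
    (hC : ∀ t ∈ Icc (0 : ℝ) 1, |Y t - Y t₀| ≤ C * |t - t₀| ^ γ) (hργ : ρ < γ) :
    IsLittleOIncrement Y t₀ ρ := by
  have hbound : Tendsto (fun h => C * |h| ^ (γ - ρ)) (incrementFilter t₀) (𝓝 0) := by
    simpa using (tendsto_abs_rpow_nhdsWithin_zero (sub_pos.2 hργ) _).const_mul C
  refine squeeze_zero_norm' ?_ hbound
  filter_upwards [self_mem_nhdsWithin] with h ⟨hne, hmem⟩
  have hpos : 0 < |h| := abs_pos.2 hne
  have hYh := hC _ hmem
  rw [add_sub_cancel_left] at hYh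
  rw [Real.norm_eq_abs, abs_div, abs_of_pos (Real.rpow_pos_of_pos hpos ρ),
    div_le_iff₀ (Real.rpow_pos_of_pos hpos ρ), mul_assoc, ← Real.rpow_add hpos, sub_add_cancel]
  exact hYh

lemma pointwiseHolderExp_eq_of_forall {Y : ℝ → ℝ} {t₀ α : ℝ} (hα : α ∈ Ioc (0 : ℝ) 1)
    (hlt : ∀ ρ ∈ Ico 0 α, IsLittleOIncrement Y t₀ ρ)
    (hgt : ∀ q : ℚ, α < q → ¬ IsLittleOIncrement Y t₀ q) :
    pointwiseHolderExp Y t₀ = α := by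
  refine csSup_eq_of_forall_le_of_forall_lt_exists_gt
    ⟨0, ⟨le_rfl, zero_le_one⟩, hlt 0 ⟨le_rfl, hα.1⟩⟩ ?_ ?_
  · rintro ρ ⟨-, hρ⟩
    by_contra! hαρ
    obtain ⟨q, hαq, hqρ⟩ := exists_rat_btwn hαρ
    exact hgt q hαq (IsLittleOIncrement.mono hρ hqρ.le)
  · intro w hw
    obtain ⟨ρ, hwρ, hρα⟩ := exists_between (max_lt hw hα.1)
    have hρ0 : 0 ≤ ρ := (le_max_right w 0).trans hwρ.le
    exact ⟨ρ, ⟨⟨hρ0, hρα.le.trans hα.2⟩, hlt ρ ⟨hρ0, hρα⟩⟩, (le_max_left w 0).trans_lt hwρ⟩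

lemma incrementFilter_neBot {t₀ : ℝ} (ht₀ : t₀ ∈ Icc (0 : ℝ) 1) : (incrementFilter t₀).NeBot := by
  rw [← mem_closure_iff_nhdsWithin_neBot]
  rcases lt_or_ge t₀ 1 with h1 | h1
  · have hsub : Ioc 0 (1 - t₀) ⊆ {h : ℝ | h ≠ 0 ∧ t₀ + h ∈ Icc (0 : ℝ) 1} := fun h hh =>
      ⟨hh.1.ne', by linarith [ht₀.1, hh.1], by linarith [hh.2]⟩
    refine closure_mono hsub ?_
    rw [closure_Ioc (by linarith)]
    exact ⟨le_rfl, by linarith⟩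
  · have hsub : Ico (-t₀) 0 ⊆ {h : ℝ | h ≠ 0 ∧ t₀ + h ∈ Icc (0 : ℝ) 1} := fun h hh =>
      ⟨hh.2.ne, by linarith [hh.1], by linarith [ht₀.2, hh.2]⟩
    refine closure_mono hsub ?_
    rw [closure_Ico (by linarith)]
    exact ⟨by linarith, le_rfl⟩

lemma gaussianPDFReal_le_inv_sqrt (μ : ℝ) (v : ℝ≥0) (x : ℝ) :
    gaussianPDFReal μ v x ≤ (√(2 * Real.pi * v))⁻¹ := by
  rw [gaussianPDFReal_def]
  refine mul_le_of_le_one_right (by positivity) (Real.exp_le_one_iff.2 ?_)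
  exact div_nonpos_of_nonpos_of_nonneg (neg_nonpos.2 (sq_nonneg _)) (by positivity)

lemma gaussianReal_le_ofReal_mul_volume (μ : ℝ) {v : ℝ≥0} (hv : v ≠ 0) (s : Set ℝ) :
    gaussianReal μ v s ≤ ENNReal.ofReal (√(2 * Real.pi * v))⁻¹ * volume s := by
  rw [gaussianReal_apply μ hv, ← setLIntegral_const]
  exact lintegral_mono fun x => ENNReal.ofReal_le_ofReal (gaussianPDFReal_le_inv_sqrt μ v x)

lemma measure_abs_le_le_of_map_eq_gaussianReal {Ω : Type*} [MeasurableSpace Ω] {P : Measure Ω}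
    {X : Ω → ℝ} (hX : Measurable X) {v : ℝ≥0} (hlaw : P.map X = gaussianReal 0 v) {w : ℝ}
    (hw : 0 < w) (hwv : w ≤ v) (a : ℝ) :
    P {ω | |X ω| ≤ a} ≤ ENNReal.ofReal (a / √w) := by
  have hv : v ≠ 0 := by
    rintro rfl
    exact (hw.trans_le hwv).ne' rfl
  have hset : {ω | |X ω| ≤ a} = X ⁻¹' Icc (-a) a := by
    ext ω
    simp [abs_le]
  rw [hset, ← Measure.map_apply hX measurableSet_Icc, hlaw]
  refine (gaussianReal_le_ofReal_mul_volume 0 hv _).trans ?_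
  rw [Real.volume_Icc, ← ENNReal.ofReal_mul (by positivity), ENNReal.ofReal_le_ofReal_iff']
  rcases le_or_gt a 0 with ha | ha
  · exact Or.inr (mul_nonpos_of_nonneg_of_nonpos (by positivity) (by linarith))
  left
  -- `2 / √(2π) ≤ 1` absorbs the Gaussian normalisation
  have hsqrt : 2 * √w ≤ √(2 * Real.pi * v) := by
    rw [show 2 * √w = √(4 * w) by rw [Real.sqrt_mul' _ hw.le]; norm_num]
    exact Real.sqrt_le_sqrt (by nlinarith [Real.pi_gt_three])
  have hw' : 0 < √w := Real.sqrt_pos.2 hw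
  rw [inv_mul_eq_div, div_le_div_iff₀ (by linarith) hw']
  nlinarith

lemma eventually_mul_abs_sub_le_integral {g : ℝ → ℝ} {I : Set ℝ} (hI : I.OrdConnected)
    (hg : ContinuousOn g I) {t₀ c : ℝ} (ht₀ : t₀ ∈ I) (hc : c < g t₀) :
    ∀ᶠ u in 𝓝[I] t₀, c * |u - t₀| ≤ ∫ s in min u t₀..max u t₀, g s := by
  obtain ⟨δ, hδ, hball⟩ := Metric.mem_nhdsWithin_iff.1 ((hg t₀ ht₀).eventually (lt_mem_nhds hc))
  filter_upwards [self_mem_nhdsWithin, nhdsWithin_le_nhds (Metric.ball_mem_nhds t₀ hδ)]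
    with u hu huδ
  have hsub : uIcc u t₀ ⊆ Metric.ball t₀ δ ∩ I := subset_inter
    ((convex_ball t₀ δ).ordConnected.uIcc_subset huδ (Metric.mem_ball_self hδ))
    (hI.uIcc_subset hu ht₀)
  have hint : IntervalIntegrable g volume (min u t₀) (max u t₀) :=
    (hg.mono (hsub.trans inter_subset_right)).intervalIntegrable_of_Icc min_le_max
  calc c * |u - t₀| = ∫ _ in min u t₀..max u t₀, c := by
        rw [intervalIntegral.integral_const, smul_eq_mul, max_sub_min_eq_abs', mul_comm]
    _ ≤ ∫ s in min u t₀..max u t₀, g s :=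
        intervalIntegral.integral_mono_on min_le_max intervalIntegrable_const hint
          fun s hs => (hball (hsub hs)).le

lemma ae_frequently_notMem_of_tendsto_measure_zero {α : Type*} [MeasurableSpace α]
    {μ : Measure α} {s : ℕ → Set α} (hs : Tendsto (fun n => μ (s n)) atTop (𝓝 0)) :
    ∀ᵐ x ∂μ, ∃ᶠ n in atTop, x ∉ s n := by
  have htail : ∀ N, μ (⋂ n ≥ N, s n) = 0 := fun N =>
    le_antisymm (ge_of_tendsto hs (eventually_atTop.2
      ⟨N, fun n hn => measure_mono (biInter_subset_of_mem hn)⟩)) zero_le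
  refine measure_mono_null (fun x hx => ?_) (measure_iUnion_null htail)
  have hx' : ∀ᶠ n in atTop, x ∈ s n := by simpa [not_frequently] using hx
  obtain ⟨N, hN⟩ := eventually_atTop.1 hx'
  exact mem_iUnion.2 ⟨N, mem_iInter₂.2 hN⟩

lemma tendsto_measure_abs_increment_le_rpow {Ω : Type*} [MeasurableSpace Ω] (P : Measure Ω)
    {f : ℝ → ℝ} (hf : ContinuousOn f (Icc 0 1)) {t₀ : ℝ} (ht₀ : t₀ ∈ Icc (0 : ℝ) 1)
    (hft₀ : f t₀ ≠ 0) {Z : ℝ → Ω → ℝ} (hZmeas : ∀ t, Measurable (Z t))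
    (hlaw : ∀ t ∈ Icc (0 : ℝ) 1, P.map (fun ω => Z t ω - Z t₀ ω) =
      gaussianReal 0 (∫ s in min t t₀..max t t₀, f s ^ 2).toNNReal)
    {q : ℝ} (hq : 1 / 2 < q) :
    Tendsto (fun h => P {ω | |Z (t₀ + h) ω - Z t₀ ω| ≤ |h| ^ q}) (incrementFilter t₀) (𝓝 0) := by
  set c := f t₀ ^ 2 / 2
  have hc : 0 < c := by positivity
  have hshift : Tendsto (t₀ + ·) (incrementFilter t₀) (𝓝[Icc 0 1] t₀) :=
    tendsto_nhdsWithin_iff.2 ⟨(continuous_const_add t₀).tendsto' 0 t₀ (add_zero t₀)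
      |>.mono_left nhdsWithin_le_nhds, eventually_nhdsWithin_of_forall fun h hh => hh.2⟩
  have hvar := hshift.eventually (eventually_mul_abs_sub_le_integral ordConnected_Icc
    (hf.pow 2) ht₀ (half_lt_self (by positivity) : c < f t₀ ^ 2))
  have hbound : Tendsto (fun h => ENNReal.ofReal (|h| ^ (q - 1 / 2) / √c))
      (incrementFilter t₀) (𝓝 0) := by
    simpa using ENNReal.tendsto_ofReal
      ((tendsto_abs_rpow_nhdsWithin_zero (sub_pos.2 hq) _).div_const √c)
  refine tendsto_of_tendsto_of_tendsto_of_le_of_le' tendsto_const_nhds hbound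
    (Eventually.of_forall fun _ => zero_le) ?_
  filter_upwards [hvar, self_mem_nhdsWithin] with h hvar_h hh
  have hpos : 0 < |h| := abs_pos.2 hh.1
  rw [add_sub_cancel_left] at hvar_h
  refine (measure_abs_le_le_of_map_eq_gaussianReal ((hZmeas _).sub (hZmeas _)) (hlaw _ hh.2)
    (mul_pos hc hpos) (hvar_h.trans (Real.le_coe_toNNReal _)) _).trans_eq ?_
  rw [Real.sqrt_mul hc.le, Real.sqrt_eq_rpow |h|, Real.rpow_sub hpos]
  ring_nf

lemma ae_not_isLittleOIncrement {Ω : Type*} [MeasurableSpace Ω] (P : Measure Ω)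
    {f : ℝ → ℝ} (hf : ContinuousOn f (Icc 0 1)) {t₀ : ℝ} (ht₀ : t₀ ∈ Icc (0 : ℝ) 1)
    (hft₀ : f t₀ ≠ 0) {Z : ℝ → Ω → ℝ} (hZmeas : ∀ t, Measurable (Z t))
    (hlaw : ∀ t ∈ Icc (0 : ℝ) 1, P.map (fun ω => Z t ω - Z t₀ ω) =
      gaussianReal 0 (∫ s in min t t₀..max t t₀, f s ^ 2).toNNReal)
    {q : ℝ} (hq : 1 / 2 < q) :
    ∀ᵐ ω ∂P, ¬ IsLittleOIncrement (fun t => Z t ω) t₀ q := by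
  have := incrementFilter_neBot ht₀
  obtain ⟨u, hu⟩ := (incrementFilter t₀).exists_seq_tendsto
  filter_upwards [ae_frequently_notMem_of_tendsto_measure_zero
    ((tendsto_measure_abs_increment_le_rpow P hf ht₀ hft₀ hZmeas hlaw hq).comp hu)]
    with ω hfreq hlittle
  have hsmall := (hlittle.comp hu).eventually (Metric.closedBall_mem_nhds 0 one_pos)
  obtain ⟨n, hn, hun⟩ :=
    (hfreq.and_eventually (hsmall.and (hu.eventually self_mem_nhdsWithin))).exists
  have hpos : 0 < |u n| ^ q := Real.rpow_pos_of_pos (abs_pos.2 hun.2.1) q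
  simp only [Function.comp_apply, dist_zero_right, Real.norm_eq_abs,
    abs_div, abs_of_pos hpos, div_le_one hpos] at hun
  exact hn hun.1

theorem statement6 {Ω : Type*} [MeasurableSpace Ω] (P : Measure Ω) [IsProbabilityMeasure P]
    (f : ℝ → ℝ) (hf : ContinuousOn f (Set.Icc 0 1))
    (t₀ : ℝ) (ht₀ : t₀ ∈ Set.Icc (0 : ℝ) 1) (hft₀ : f t₀ ≠ 0)
    (Z : ℝ → Ω → ℝ) (hZmeas : ∀ t, Measurable (Z t))
    (hlaw : ∀ t₁ ∈ Set.Icc (0 : ℝ) 1, ∀ t₂ ∈ Set.Icc (0 : ℝ) 1,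
      Measure.map (fun ω => Z t₁ ω - Z t₂ ω) P =
        gaussianReal 0 (∫ s in min t₁ t₂..max t₁ t₂, (f s) ^ 2).toNNReal)
    (hHolder : ∀ᵐ ω ∂P, ∀ γ ∈ Set.Ioo (0 : ℝ) (1 / 2),
      ∃ C : ℝ, ∀ t₁ ∈ Set.Icc (0 : ℝ) 1, ∀ t₂ ∈ Set.Icc (0 : ℝ) 1,
        |Z t₁ ω - Z t₂ ω| ≤ C * |t₁ - t₂| ^ γ) :
    P {ω | pointwiseHolderExp (fun t => Z t ω) t₀ = 1 / 2} = 1 := by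
  have hupper : ∀ᵐ ω ∂P, ∀ q : ℚ, 1 / 2 < (q : ℝ) →
      ¬ IsLittleOIncrement (fun t => Z t ω) t₀ q :=
    ae_all_iff.2 fun q => (em (1 / 2 < (q : ℝ))).elim
      (fun hq => (ae_not_isLittleOIncrement P hf ht₀ hft₀ hZmeas
        (fun t ht => hlaw t ht t₀ ht₀) hq).mono fun _ h _ => h)
      (fun hq => .of_forall fun _ h => absurd h hq)
  have hexp : ∀ᵐ ω ∂P, pointwiseHolderExp (fun t => Z t ω) t₀ = 1 / 2 := by
    filter_upwards [hHolder, hupper] with ω hholder hgt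
    refine pointwiseHolderExp_eq_of_forall ⟨by norm_num, by norm_num⟩ (fun ρ hρ => ?_) hgt
    obtain ⟨C, hC⟩ := hholder ((ρ + 1 / 2) / 2) ⟨by linarith [hρ.1], by linarith [hρ.2]⟩
    exact isLittleOIncrement_of_le_mul_rpow (fun t ht => hC t ht t₀ ht₀) (by linarith [hρ.2])
  exact (measure_congr (eventuallyEq_univ.2 hexp)).trans measure_univ
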